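/- Under the orthonormality and five-term recurrence hypotheses below, for every integer k ≥ 0: lim_{n→∞} ∫_{−1}^{1} Q(x)^k P_n(x)² W(x) dx = ∫_{−1}^{1} Q(x)^k dμ_e(x). -/

import Mathlib

/-!
Both limits obey one recursion. Writing `Q((z + z⁻¹)/2) = ∑ c_j z^j`, iterating the five-term
recurrence shows that `∫ Q^k P_n P_{n+r} W` tends to the coefficient of `z^r` in `(∑ c_j z^j)^k`,
since `u_{n,j} → c_j`. On the other side, `x = cos θ` carries `μ_e` to `dθ/π` on `[0, π]`, and
`Q(cos θ) cos rθ = ∑ c_j cos (r - j)θ`, so `∫ Q^k cos rθ dθ/π` satisfies the same recursion with the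
same initial values `δ_{r,0}`.
-/

open Finset Filter Topology Real MeasureTheory Polynomial

noncomputable def convPow (J : Finset ℤ) (c : ℤ → ℝ) : ℕ → ℤ → ℝ
  | 0, r => if r = 0 then 1 else 0
  | k + 1, r => ∑ j ∈ J, c j * convPow J c k (r - j)

theorem tendsto_toNat_natCast_add_atTop (j : ℤ) :
    Tendsto (fun n : ℕ => ((n : ℤ) + j).toNat) atTop atTop :=
  tendsto_atTop_atTop.2 fun m => ⟨m + j.natAbs, fun n hn => by omega⟩

theorem tendsto_of_banded_recurrence {J : Finset ℤ} {c : ℤ → ℝ} {u : ℕ → ℤ → ℝ}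
    {a : ℕ → ℕ → ℕ → ℝ} (h0 : ∀ n m, a 0 n m = if n = m then 1 else 0)
    (hsucc : ∀ k n m,
      a (k + 1) n m = ∑ j ∈ J with 0 ≤ (n : ℤ) + j, u n j * a k ((n : ℤ) + j).toNat m)
    (hu : ∀ j ∈ J, Tendsto (u · j) atTop (𝓝 (c j))) (k : ℕ) (r : ℤ) :
    Tendsto (fun n : ℕ => a k n ((n : ℤ) + r).toNat) atTop (𝓝 (convPow J c k r)) := by
  induction k generalizing r with
  | zero =>
    refine tendsto_const_nhds.congr' ?_
    filter_upwards [eventually_ge_atTop r.natAbs] with n hn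
    rw [h0, convPow]
    exact if_congr (by omega) rfl rfl
  | succ k ih =>
    simp only [hsucc, sum_filter, convPow]
    refine tendsto_finsetSum J fun j hj => ?_
    have hterm := (hu j hj).mul ((ih (r - j)).comp (tendsto_toNat_natCast_add_atTop j))
    refine hterm.congr' ?_
    filter_upwards [eventually_ge_atTop j.natAbs] with n hn
    rw [if_pos (by omega), Function.comp_apply]
    congr 3
    omega

theorem integral_pow_succ_mul_eval_mul_eval {q W : ℝ → ℝ} {a b : ℝ} (hq : Continuous q)
    (hW : IntervalIntegrable W volume a b) {P : ℕ → ℝ[X]} {J : Finset ℤ} {u : ℕ → ℤ → ℝ}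
    (hrec : ∀ n x, q x * (P n).eval x
      = ∑ j ∈ J with 0 ≤ (n : ℤ) + j, u n j * (P ((n : ℤ) + j).toNat).eval x)
    (k n m : ℕ) :
    ∫ x in a..b, q x ^ (k + 1) * (P n).eval x * (P m).eval x * W x
      = ∑ j ∈ J with 0 ≤ (n : ℤ) + j,
          u n j * ∫ x in a..b, q x ^ k * (P ((n : ℤ) + j).toNat).eval x * (P m).eval x * W x := by
  have hint : ∀ i : ℕ, IntervalIntegrable
      (fun x => q x ^ k * (P i).eval x * (P m).eval x * W x) volume a b := fun i =>
    hW.continuousOn_mul (((hq.pow k).mul (P i).continuous).mul (P m).continuous).continuousOn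
  simp only [← intervalIntegral.integral_const_mul]
  rw [← intervalIntegral.integral_finsetSum fun j _ => (hint _).const_mul _]
  refine intervalIntegral.integral_congr fun x _ => ?_
  have hsplit : q x ^ (k + 1) * (P n).eval x * (P m).eval x * W x
      = q x * (P n).eval x * (q x ^ k * (P m).eval x * W x) := by ring
  rw [hsplit, hrec, sum_mul]
  exact sum_congr rfl fun j _ => by ring

theorem integral_div_pi_mul_sqrt_one_sub_sq (f : ℝ → ℝ) :
    ∫ x in (-1 : ℝ)..1, f x / (π * √(1 - x ^ 2)) = (∫ θ in 0..π, f (cos θ)) / π := by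
  have hcov := integral_image_eq_integral_abs_deriv_smul measurableSet_Icc
    (fun θ _ => (hasDerivAt_cos θ).hasDerivWithinAt) injOn_cos
    (fun x => f x / (π * √(1 - x ^ 2)))
  rw [bijOn_cos.image_eq] at hcov
  rw [intervalIntegral.integral_of_le (by norm_num), ← integral_Icc_eq_integral_Ioc, hcov,
    intervalIntegral.integral_of_le pi_pos.le, ← integral_Icc_eq_integral_Ioc,
    ← integral_div, integral_Icc_eq_integral_Ioo, integral_Icc_eq_integral_Ioo]
  refine setIntegral_congr_fun measurableSet_Ioo fun θ hθ => ?_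
  have hsin : 0 < sin θ := sin_pos_of_pos_of_lt_pi hθ.1 hθ.2
  rw [smul_eq_mul, abs_neg, abs_of_pos hsin, ← sin_eq_sqrt_one_sub_cos_sq hθ.1.le hθ.2.le]
  field_simp

theorem integral_pow_mul_cos_eq_pi_mul_convPow {J : Finset ℤ} {c : ℤ → ℝ} {q : ℝ → ℝ}
    (hq : Continuous q)
    (hmul : ∀ (r : ℤ) (θ : ℝ), q θ * cos (r * θ) = ∑ j ∈ J, c j * cos ((r - j : ℤ) * θ))
    (k : ℕ) (r : ℤ) :
    ∫ θ in 0..π, q θ ^ k * cos (r * θ) = π * convPow J c k r := by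
  induction k generalizing r with
  | zero =>
    rw [convPow]
    split_ifs with hr <;> simp [hr]
  | succ k ih =>
    have hint : ∀ j : ℤ,
        IntervalIntegrable (fun θ => q θ ^ k * cos ((r - j : ℤ) * θ)) volume 0 π := fun j =>
      ((hq.pow k).mul (continuous_cos.comp (continuous_const_mul _))).intervalIntegrable _ _
    calc ∫ θ in 0..π, q θ ^ (k + 1) * cos (r * θ)
        = ∫ θ in 0..π, ∑ j ∈ J, c j * (q θ ^ k * cos ((r - j : ℤ) * θ)) := by
          refine intervalIntegral.integral_congr fun θ _ => ?_
          rw [pow_succ, mul_assoc, hmul, mul_sum]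
          exact sum_congr rfl fun j _ => by ring
      _ = π * convPow J c (k + 1) r := by
          rw [intervalIntegral.integral_finsetSum fun j _ => (hint j).const_mul (c j), convPow,
            mul_sum]
          refine sum_congr rfl fun j _ => ?_
          rw [intervalIntegral.integral_const_mul, ih]
          ring

/-- The coefficients of the Laurent polynomial `Q((z + z⁻¹) / 2) = ∑ c_j z^j`. -/
noncomputable def quadraticSymbol (d0 d1 : ℝ) (j : ℤ) : ℝ :=
  if j = 0 then d1 / 4 else if j = 1 ∨ j = -1 then d0 / 2 else d1 / 8

theorem quadratic_cos_mul_cos (d0 d1 : ℝ) (r : ℤ) (θ : ℝ) :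
    (d1 / 2 * cos θ ^ 2 + d0 * cos θ) * cos (r * θ)
      = ∑ j ∈ Icc (-2 : ℤ) 2, quadraticSymbol d0 d1 j * cos ((r - j : ℤ) * θ) := by
  have hsum : ∀ s : ℝ, cos ((s + 1) * θ) + cos ((s - 1) * θ) = 2 * cos θ * cos (s * θ) := by
    intro s
    rw [add_mul, sub_mul, one_mul, cos_add, cos_sub]
    ring
  have h0 := hsum r
  have h1 := hsum (r + 1)
  have h2 := hsum (r - 1)
  simp only [show Icc (-2 : ℤ) 2 = {-2, -1, 0, 1, 2} from rfl, quadraticSymbol]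
  norm_num
  ring_nf at h0 h1 h2 ⊢
  linear_combination (-(d0 / 2) - d1 * cos θ / 4) * h0 - d1 / 8 * h1 - d1 / 8 * h2

theorem Qmoments_of_orthonormal_system_tendsto_arcsine
    (d0 d1 : ℝ)
    (W : ℝ → ℝ)
    (hWint : MeasureTheory.IntegrableOn W (Set.Icc (-1 : ℝ) 1))
    (P : ℕ → Polynomial ℝ)
    (horth : ∀ n m : ℕ,
      (∫ x in (-1 : ℝ)..1, (P n).eval x * (P m).eval x * W x)
        = if n = m then 1 else 0)
    (u : ℕ → ℤ → ℝ)
    (hrec : ∀ (n : ℕ) (x : ℝ),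
      (d1 / 2 * x ^ 2 + d0 * x) * (P n).eval x
        = ∑ j ∈ (Finset.Icc (-2 : ℤ) 2).filter (fun j => 0 ≤ (n : ℤ) + j),
            u n j * (P ((n : ℤ) + j).toNat).eval x)
    (hu0 : Tendsto (fun n : ℕ => u n 0) atTop (𝓝 (d1 / 4)))
    (hu1 : Tendsto (fun n : ℕ => u n 1) atTop (𝓝 (d0 / 2)))
    (hu1' : Tendsto (fun n : ℕ => u n (-1)) atTop (𝓝 (d0 / 2)))
    (hu2 : Tendsto (fun n : ℕ => u n 2) atTop (𝓝 (d1 / 8)))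
    (hu2' : Tendsto (fun n : ℕ => u n (-2)) atTop (𝓝 (d1 / 8)))
    (k : ℕ) :
    Tendsto
      (fun n : ℕ =>
        ∫ x in (-1 : ℝ)..1, (d1 / 2 * x ^ 2 + d0 * x) ^ k * ((P n).eval x) ^ 2 * W x)
      atTop
      (𝓝 (∫ x in (-1 : ℝ)..1,
        (d1 / 2 * x ^ 2 + d0 * x) ^ k / (π * Real.sqrt (1 - x ^ 2)))) := by
  have hu : ∀ j ∈ Icc (-2 : ℤ) 2, Tendsto (u · j) atTop (𝓝 (quadraticSymbol d0 d1 j)) := by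
    intro j hj
    obtain ⟨hj₁, hj₂⟩ := mem_Icc.1 hj
    interval_cases j <;> simpa [quadraticSymbol]
  have hW : IntervalIntegrable W volume (-1) 1 :=
    (intervalIntegrable_iff_integrableOn_Icc_of_le (by norm_num)).2 hWint
  have hmoments := tendsto_of_banded_recurrence
    (a := fun k n m => ∫ x in (-1 : ℝ)..1,
      (d1 / 2 * x ^ 2 + d0 * x) ^ k * (P n).eval x * (P m).eval x * W x)
    (fun n m => by simpa using horth n m)
    (integral_pow_succ_mul_eval_mul_eval (by fun_prop) hW hrec) hu k 0
  have hlimit : ∫ x in (-1 : ℝ)..1, (d1 / 2 * x ^ 2 + d0 * x) ^ k / (π * √(1 - x ^ 2))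
      = convPow (Icc (-2) 2) (quadraticSymbol d0 d1) k 0 := by
    have hcos := integral_pow_mul_cos_eq_pi_mul_convPow (by fun_prop)
      (quadratic_cos_mul_cos d0 d1) k 0
    simp only [Int.cast_zero, zero_mul, cos_zero, mul_one] at hcos
    rw [integral_div_pi_mul_sqrt_one_sub_sq, hcos]
    field_simp
  rw [hlimit]
  refine hmoments.congr fun n => ?_
  simp only [add_zero, Int.toNat_natCast, sq, mul_assoc]
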